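/- In the affine Weyl group of type Ã₂, for integers j and non-negative integers m,n, the inverse of ρʲ(θ(m,n)) equals ρ^{j+n−m}(θ(n,m)), where ρ is the automorphism induced by the rotation s₀↦s₁↦s₂↦s₀. -/

import Mathlib

open CoxeterSystem LaurentPolynomial

noncomputable section

/-- The Coxeter matrix of affine type Ã₂: all off-diagonal entries equal `3`. -/
def A2TildeMatrix : CoxeterMatrix (ZMod 3) :=
  { M := Matrix.of fun i j => if i = j then 1 else 3
    isSymm := by decide
    diagonal := by decide
    off_diagonal := by
      intro i i' h
      simp [Matrix.of_apply, h] }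

/-- The affine Weyl group of type Ã₂. -/
abbrev A2Tilde : Type _ := A2TildeMatrix.Group

/-- The canonical Coxeter system of type Ã₂; the simple reflections are
`s₀ = csA.simple 0`, `s₁ = csA.simple 1`, `s₂ = csA.simple 2`. -/
def csA : CoxeterSystem A2TildeMatrix A2Tilde := A2TildeMatrix.toCoxeterSystem

/-- The word with labels `1, 2, …, 2m+1, 2m+2, 2m+1, …, 2m−2n+1`, read mod 3
(the label `k` stands for the simple reflection `s_{k mod 3}`). -/
def thetaWord (m n : ℕ) : List (ZMod 3) :=
  ((List.range (2 * m + 2)).map fun i => ((i + 1 : ℕ) : ZMod 3)) ++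
    ((List.range (2 * n + 1)).map fun j => (((2 * m + 1 : ℤ) - (j : ℤ)) : ZMod 3))

/-- The element `θ(m,n)` of the affine Weyl group of type Ã₂. -/
def theta (m n : ℕ) : A2Tilde := csA.wordProd (thetaWord m n)

/-!
Inverting a word product reverses the word. The labels of `θ(m,n)` at positions
`0, …, 2m+2n+2` form the tent `2m+2 - |k - (2m+1)|`; reflecting it at the midpoint gives the
tent of `θ(n,m)` raised by `2m - 2n ≡ n - m (mod 3)`, and adding a constant `c` to every label
is the action of `ρᶜ`.
-/
theorem CoxeterSystem.map_wordProd {B B' W W' F : Type*} [Group W] [Group W']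
    {M : CoxeterMatrix B} {M' : CoxeterMatrix B'} (cs : CoxeterSystem M W)
    {cs' : CoxeterSystem M' W'} [FunLike F W W'] [MonoidHomClass F W W'] {φ : F} {τ : B → B'}
    (h : ∀ i, φ (cs.simple i) = cs'.simple (τ i)) (l : List B) :
    φ (cs.wordProd l) = cs'.wordProd (l.map τ) := by
  simp only [wordProd, map_list_prod, List.map_map]
  exact congrArg List.prod (List.map_congr_left fun i _ => h i)

theorem CoxeterSystem.zpow_apply_simple {B W : Type*} [Group W] [AddCommGroup B]
    {M : CoxeterMatrix B} (cs : CoxeterSystem M W) {ρ : MulAut W} {c : B}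
    (h : ∀ i, ρ (cs.simple i) = cs.simple (i + c)) (j : ℤ) (i : B) :
    (ρ ^ j) (cs.simple i) = cs.simple (i + j • c) := by
  induction j using Int.induction_on generalizing i with
  | zero => simp
  | succ k ih => rw [zpow_add_one, MulAut.mul_apply, h, ih, add_one_zsmul, add_assoc, add_comm c]
  | pred k ih =>
    have h_inv : ρ⁻¹ (cs.simple i) = cs.simple (i - c) := by
      rw [MulAut.inv_apply, MulEquiv.symm_apply_eq, h, sub_add_cancel]
    rw [zpow_sub_one, MulAut.mul_apply, h_inv, ih, sub_one_zsmul]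
    congr 1
    abel

-- `θ(m,n)` climbs from label 1 to `2m+2` and then descends, so its label at position `k` is the
-- tent `2m+2 - |k - (2m+1)|`, whatever `n` is.
def thetaLabel (m k : ℕ) : ZMod 3 := ((2 * m + 2 - |(k : ℤ) - (2 * m + 1)| : ℤ) : ZMod 3)

theorem thetaWord_eq_map_range (m n : ℕ) :
    thetaWord m n = (List.range (2 * m + 2 + (2 * n + 1))).map (thetaLabel m) := by
  rw [List.range_add, List.map_append, List.map_map, thetaWord]
  -- the second half of `thetaWord` maps over `List.range` coerced to `List ℤ` by its monad
  simp only [bind_pure_comp, List.map_eq_map, List.map_map]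
  congr 1 <;> refine List.map_congr_left fun k hk => ?_ <;> rw [List.mem_range] at hk <;>
    simp only [Function.comp_apply, thetaLabel]
  · rw [abs_of_nonpos (by omega)]
    push_cast
    ring
  · rw [abs_of_pos (by omega)]
    push_cast
    ring

theorem List.reverse_map_range {α : Type*} (f : ℕ → α) (L : ℕ) :
    ((List.range L).map f).reverse = (List.range L).map fun k => f (L - 1 - k) := by
  rw [← List.map_reverse, List.range_eq_range', List.reverse_range', ← List.range_eq_range',
    List.map_map, zero_add]
  rfl

theorem thetaWord_reverse (m n : ℕ) :
    (thetaWord m n).reverse = (thetaWord n m).map (· + (((n : ℤ) - m : ℤ) : ZMod 3)) := by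
  rw [thetaWord_eq_map_range, thetaWord_eq_map_range, List.reverse_map_range, List.map_map,
    show 2 * n + 2 + (2 * m + 1) = 2 * m + 2 + (2 * n + 1) by ring]
  refine List.map_congr_left fun k hk => ?_
  rw [List.mem_range] at hk
  simp only [Function.comp_apply, thetaLabel, ← Int.cast_add]
  rw [ZMod.intCast_eq_intCast_iff_dvd_sub,
    show 2 * m + 2 + (2 * n + 1) - 1 - k = 2 * m + 2 * n + 2 - k by omega,
    Nat.cast_sub (by omega), abs_sub_comm (k : ℤ)]
  exact ⟨n - m, by push_cast; ring_nf⟩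

theorem theta_inv {ρ : MulAut A2Tilde} (hρ : ∀ i, ρ (csA.simple i) = csA.simple (i + 1))
    (m n : ℕ) : (theta m n)⁻¹ = (ρ ^ ((n : ℤ) - m)) (theta n m) := by
  rw [theta, theta, ← wordProd_reverse, thetaWord_reverse,
    csA.map_wordProd (csA.zpow_apply_simple hρ _), zsmul_one]

/-- For the rotation automorphism `ρ` (`s₀↦s₁↦s₂↦s₀`), one has
`(ρʲ(θ(m,n)))⁻¹ = ρ^{j+n−m}(θ(n,m))` for every integer `j`. -/
theorem inv_rho_pow_theta (m n : ℕ) (ρ : MulAut A2Tilde)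
    (hρ : ∀ i : ZMod 3, ρ (csA.simple i) = csA.simple (i + 1)) (j : ℤ) :
    ((ρ ^ j) (theta m n))⁻¹ = (ρ ^ (j + (n : ℤ) - (m : ℤ))) (theta n m) := by
  rw [← map_inv, theta_inv hρ, ← MulAut.mul_apply, ← zpow_add, add_sub_assoc]

end
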